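/- Let t ≥ 0, y ∈ ℤ, and let j ≥ 0 be an integer. Define Ψ_j(x) = (1/(2πi)) ∮_{|w|=r} dw w^{−(j+1)} (1−w)^{j} w^{−(x−y)} e^{t(w−1)}, where the contour is a positively oriented circle of radius r ∈ (0,1) centered at the origin. Then the series ∑_{x ∈ ℤ} Ψ_j(x) converges absolutely and equals 1 if j = 0 and equals 0 if j ≥ 1. (Note that Ψ_j(x) = 0 for x < y − j.) -/

import Mathlib

/-! `Ψ_j(x)` is the Laurent coefficient of index `x - y + j` of the entire function
`g(w) = (1 - w)^j e^{t(w - 1)}` on the circle `|w| = r`. As `g` is entire, its coefficients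
of negative index vanish and the others are its Taylor coefficients at `0`, whatever the
radius; so `∑_x Ψ_j(x)` is the Taylor series of `g` evaluated at `1`, and `g(1) = [j = 0]`. -/

/-- `Ψ_j(x) = (1/(2πi)) ∮_{|w|=r} dw w^(-(j+1)) (1-w)^j w^(-(x-y)) e^(t(w-1))`, with the
contour a positively oriented circle of radius `r ∈ (0,1)` centered at the origin; these
are the functions `Ψ^n_j` of Theorem 2.1, with `y = y_{n-j}` an initial particle position. -/
noncomputable def Psi (t : ℝ) (y : ℤ) (j : ℕ) (r : ℝ) (x : ℤ) : ℂ :=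
  (1 / (2 * ↑Real.pi * Complex.I)) *
    ∮ w in C(0, r), w ^ (-(j + 1 : ℤ)) * (1 - w) ^ j * w ^ (-(x - y)) *
      Complex.exp (↑t * (w - 1))

open Complex Real Metric

noncomputable def laurentCoeff (f : ℂ → ℂ) (R : ℝ) (k : ℤ) : ℂ :=
  (2 * π * I)⁻¹ * ∮ w in C(0, R), w ^ (-(k + 1)) * f w

section laurentCoeff

variable {f : ℂ → ℂ} {R : ℝ}

theorem laurentCoeff_eq_zero_of_neg (hf : Differentiable ℂ f) (hR : 0 ≤ R) {k : ℤ} (hk : k < 0) :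
    laurentCoeff f R k = 0 := by
  obtain ⟨m, hm⟩ : ∃ m : ℕ, -(k + 1) = m := ⟨(-(k + 1)).toNat, by omega⟩
  have hg : Differentiable ℂ fun w : ℂ => w ^ m * f w := (differentiable_pow m).mul hf
  have hzero : ∮ w in C(0, R), w ^ m * f w = 0 :=
    circleIntegral_eq_zero_of_differentiable_on_off_countable hR Set.countable_empty
      hg.continuous.continuousOn fun z _ => hg.differentiableAt
  simp only [laurentCoeff, hm, zpow_natCast, hzero, mul_zero]

theorem cauchyPowerSeries_apply_eq_laurentCoeff_mul_pow (hR : 0 < R) (n : ℕ) (z : ℂ) :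
    (cauchyPowerSeries f 0 R n fun _ => z) = laurentCoeff f R n * z ^ n := by
  rw [cauchyPowerSeries_apply, laurentCoeff, smul_eq_mul, mul_assoc (2 * π * I)⁻¹,
    ← smul_eq_mul _ (z ^ n), ← circleIntegral.integral_smul_const]
  congr 1
  refine circleIntegral.integral_congr hR.le fun w hw => ?_
  have hw0 := ne_zero_of_mem_sphere hR.ne' ⟨w, hw⟩
  simp only [sub_zero, smul_eq_mul, div_pow, zpow_neg, zpow_add_one₀ hw0, zpow_natCast]
  field_simp

theorem hasSum_laurentCoeff_mul_pow (hf : Differentiable ℂ f) (hR : 0 < R) (z : ℂ) :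
    HasSum (fun n : ℕ => laurentCoeff f R n * z ^ n) (f z) := by
  set R' : NNReal := ⟨max R (‖z‖ + 1), hR.le.trans (le_max_left _ _)⟩
  have hR' : (0 : NNReal) < R' := hR.trans_le (le_max_left _ _)
  have hsmall := hf.differentiableOn.hasFPowerSeriesOnBall (c := 0) (R := ⟨R, hR.le⟩) hR
  have hlarge := hf.differentiableOn.hasFPowerSeriesOnBall (c := 0) hR'
  -- the Cauchy series on `C(0, R)` is the one on the larger circle `C(0, R')`, which reaches `z`
  have hseries := hsmall.hasFPowerSeriesAt.eq_formalMultilinearSeries hlarge.hasFPowerSeriesAt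
  have hz : z ∈ eball (0 : ℂ) R' := by
    simp only [mem_eball_zero_iff, enorm_eq_nnnorm]
    exact_mod_cast (lt_add_one ‖z‖).trans_le (le_max_right R _)
  have hsum := hlarge.hasSum hz
  rw [← hseries, zero_add] at hsum
  simp_rw [← cauchyPowerSeries_apply_eq_laurentCoeff_mul_pow hR]
  exact hsum

theorem hasSum_laurentCoeff_mul_zpow (hf : Differentiable ℂ f) (hR : 0 < R) (z : ℂ) :
    HasSum (fun k : ℤ => laurentCoeff f R k * z ^ k) (f z) := by
  have hvanish : ∀ k ∉ Set.range ((↑) : ℕ → ℤ), laurentCoeff f R k * z ^ k = 0 := by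
    intro k hk
    have hneg : k < 0 := by
      contrapose! hk
      exact ⟨k.toNat, Int.toNat_of_nonneg hk⟩
    rw [laurentCoeff_eq_zero_of_neg hf hR.le hneg, zero_mul]
  rw [← Nat.cast_injective.hasSum_iff hvanish]
  simpa only [Function.comp_def, zpow_natCast] using hasSum_laurentCoeff_mul_pow hf hR z

end laurentCoeff

theorem Psi_eq_laurentCoeff (t : ℝ) (y : ℤ) (j : ℕ) {r : ℝ} (hr : 0 < r) (x : ℤ) :
    Psi t y j r x = laurentCoeff (fun w => (1 - w) ^ j * exp (t * (w - 1))) r (x - y + j) := by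
  rw [Psi, laurentCoeff, one_div]
  congr 1
  refine circleIntegral.integral_congr hr.le fun w hw => ?_
  rw [show -(x - y + j + 1) = -(j + 1 : ℤ) + -(x - y) by ring,
    zpow_add₀ (ne_zero_of_mem_sphere hr.ne' ⟨w, hw⟩)]
  ring

theorem statement10_general (t : ℝ) (y : ℤ) (j : ℕ) (r : ℝ)
    (hr : r ∈ Set.Ioo (0 : ℝ) 1) :
    Summable (fun x : ℤ => Psi t y j r x) ∧
      ∑' x : ℤ, Psi t y j r x = if j = 0 then 1 else 0 := by
  set g : ℂ → ℂ := fun w => (1 - w) ^ j * exp (t * (w - 1))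
  have hg : Differentiable ℂ g := by fun_prop
  have hcoeff : HasSum (fun k : ℤ => laurentCoeff g r k) (g 1) := by
    simpa only [one_zpow, mul_one] using hasSum_laurentCoeff_mul_zpow hg hr.1 1
  have hPsi : HasSum (fun x : ℤ => Psi t y j r x) (g 1) := by
    rw [← (Equiv.addRight ((j : ℤ) - y)).hasSum_iff] at hcoeff
    refine hcoeff.congr_fun fun x => ?_
    simp only [Function.comp_apply, Equiv.coe_addRight, Psi_eq_laurentCoeff t y j hr.1]
    congr 1
    ring
  have hg1 : g 1 = if j = 0 then 1 else 0 := by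
    rcases eq_or_ne j 0 with rfl | hj <;> simp [g, *]
  exact ⟨hPsi.summable, hPsi.tsum_eq.trans hg1⟩

/-- For `t ≥ 0`, `y ∈ ℤ` and an integer `j ≥ 0`, the series `∑_{x ∈ ℤ} Ψ_j(x)` converges
absolutely and equals `1` if `j = 0` and `0` if `j ≥ 1`. -/
theorem statement10 (t : ℝ) (ht : 0 ≤ t) (y : ℤ) (j : ℕ) (r : ℝ)
    (hr : r ∈ Set.Ioo (0 : ℝ) 1) :
    Summable (fun x : ℤ => Psi t y j r x) ∧
      ∑' x : ℤ, Psi t y j r x = if j = 0 then 1 else 0 :=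
  statement10_general t y j r hr
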